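/- For every feasible transition s → s' between BDM states s, s' ∈ S with action α ∈ {D, I, N_=, N_<, d_−, b_+}, the class changes as follows: K(s') = K(s) + 1 if α = I; K(s') = K(s) − 1 if α = N_<; and K(s') = K(s) if α ∈ {D, N_=, d_−, b_+}. -/

import Mathlib

open scoped Classical ENNReal
open Filter

namespace BDM

/-- Augmented BDM state set `S̄`: batteries `b 1, …, b M` (entries outside `{1,…,M}`
are fixed to `0`), drain `d`, time residue `T`, ministep `t ∈ {1,…,M+1}`, and the
invariant `d + T + ∑ b_m = 0`. -/
structure St (M : ℕ) where
  b : ℕ → ℤ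
  d : ℤ
  T : ℤ
  t : ℕ
  ht1 : 1 ≤ t
  ht2 : t ≤ M + 1
  hb0 : ∀ m, m = 0 ∨ M < m → b m = 0
  inv : d + T + ∑ m ∈ Finset.range M, b (m + 1) = 0

/-- Membership in the (restricted) state set `S`: `0 ≤ T ≤ M`. -/
def inS {M : ℕ} (s : St M) : Prop := 0 ≤ s.T ∧ s.T ≤ (M : ℤ)

/-- The initial state `s₀ = (0,…,0,0;0,M+1)`. -/
def init (M : ℕ) : St M where
  b := fun _ => 0
  d := 0
  T := 0
  t := M + 1
  ht1 := Nat.le_add_left 1 M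
  ht2 := le_refl _
  hb0 := fun _ _ => rfl
  inv := by simp

/-- The six actions of the BDM. -/
inductive Act : Type
  | D | I | Ne | Nl | dm | bp
deriving DecidableEq

/-- Feasible transitions of the BDM. -/
def Step {M : ℕ} (s : St M) : Act → St M → Prop
  | .D, s' => s.t ≤ M ∧ s.d < s.b s.t ∧ s'.t = s.t + 1 ∧ s'.T = s.T ∧
      s'.d = s.b s.t ∧ s'.b = Function.update s.b s.t s.d
  | .I, s' => s.t ≤ M ∧ s.d < s.b s.t ∧ s'.t = s.t + 1 ∧ s'.T = s.T ∧
      s'.d = s.d ∧ s'.b = s.b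
  | .Ne, s' => s.t ≤ M ∧ s.b s.t = s.d ∧ s'.t = s.t + 1 ∧ s'.T = s.T ∧
      s'.d = s.d ∧ s'.b = s.b
  | .Nl, s' => s.t ≤ M ∧ s.b s.t < s.d ∧ s'.t = s.t + 1 ∧ s'.T = s.T ∧
      s'.d = s.d ∧ s'.b = s.b
  | .dm, s' => s.t = M + 1 ∧ s.T < M ∧ s'.t = 1 ∧ s'.T = s.T + 1 ∧
      s'.d = s.d - 1 ∧ s'.b = s.b
  | .bp, s' => s.t = M + 1 ∧ s.T = M ∧ s'.t = 1 ∧ s'.T = 0 ∧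
      s'.d = s.d ∧ s'.b = fun m => if 1 ≤ m ∧ m ≤ M then s.b m + 1 else 0

/-- The `(M+1)`-tuple `(b_1,…,b_{t−1},d,b_t,…,b_M)` as a list. -/
def tuple {M : ℕ} (s : St M) : List ℤ :=
  ((List.range M).map (fun m => s.b (m + 1))).insertIdx (s.t - 1) s.d

/-- One transposition of adjacent entries of a list. -/
def AdjSwap (l l' : List ℤ) : Prop :=
  ∃ l₁ x y l₂, l = l₁ ++ x :: y :: l₂ ∧ l' = l₁ ++ y :: x :: l₂

/-- The set of numbers `n` such that `l` can be sorted into nonincreasing order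
by `n` transpositions of adjacent entries. -/
def SortCost (l : List ℤ) : Set ℕ :=
  {n | ∃ f : ℕ → List ℤ, f 0 = l ∧ (∀ i < n, AdjSwap (f i) (f (i + 1))) ∧
        (f n).Pairwise (· ≥ ·)}

/-- `π_l`: the minimal number of adjacent transpositions needed to sort `l`
into nonincreasing order. -/
noncomputable def piMin (l : List ℤ) : ℕ := sInf (SortCost l)

/-- The nonincreasing rearrangement of a list. -/
def sortedTuple (l : List ℤ) : List ℤ := l.insertionSort (· ≥ ·)

/-- The class `K(s) = −π_s + M·T + 2·∑_{m=1}^{M+1} b̃_m·(M+1−m)`. -/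
noncomputable def Kc {M : ℕ} (s : St M) : ℤ :=
  -(piMin (tuple s) : ℤ) + (M : ℤ) * s.T +
    2 * ∑ i ∈ Finset.range (M + 1), (sortedTuple (tuple s)).getD i 0 * ((M : ℤ) - i)

/-- The transition matrix `𝒯(s,s')` of the BDM, with values in `ℝ≥0∞`. -/
noncomputable def Tmat (M q : ℕ) (s s' : St M) : ℝ≥0∞ :=
  if Step s .D s' then ((q : ℝ≥0∞) - 1) / q
  else if Step s .I s' then 1 / q
  else if (Step s .Ne s' ∨ Step s .Nl s' ∨ Step s .dm s' ∨ Step s .bp s') then 1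
  else 0

/-- The state set `S` as a subtype. -/
def SS (M : ℕ) : Type := {s : St M // inS s}

/-- The mass distributions `μ_τ` on `S`: `μ_0` is the point mass at `s₀` and
`μ_{τ+1}(s') = ∑_{s∈S} 𝒯(s,s')·μ_τ(s)`. -/
noncomputable def mu (M q : ℕ) : ℕ → SS M → ℝ≥0∞
  | 0, s => if s.1 = init M then 1 else 0
  | τ + 1, s' => ∑' s : SS M, Tmat M q s.1 s'.1 * mu M q τ s

/-- The asymptotic measure `μ_∞(s) = limsup_{τ→∞} μ_τ(s)`. -/
noncomputable def muInf (M q : ℕ) (s : SS M) : ℝ≥0∞ :=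
  Filter.atTop.limsup (fun τ => mu M q τ s)

section ClassAux

/-! ### Auxiliary machinery for the class-change theorem -/

/-- number of inversions w.r.t. nonincreasing order: pairs `i<j` with `l_i < l_j`. -/
def invCount : List ℤ → ℕ
  | [] => 0
  | x :: xs => xs.countP (fun y => decide (x < y)) + invCount xs

@[simp] lemma invCount_nil : invCount [] = 0 := rfl
@[simp] lemma invCount_cons (x : ℤ) (xs : List ℤ) :
    invCount (x :: xs) = xs.countP (fun y => decide (x < y)) + invCount xs := rfl

lemma invCount_eq_zero_iff (l : List ℤ) : invCount l = 0 ↔ l.Pairwise (· ≥ ·) := by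
  induction l with
  | nil => simp
  | cons x xs ih =>
    simp only [invCount_cons, Nat.add_eq_zero, List.pairwise_cons, ih,
      List.countP_eq_zero]
    constructor
    · rintro ⟨h1, h2⟩
      exact ⟨fun y hy => by simpa using not_lt.mp (by simpa using h1 y hy), h2⟩
    · rintro ⟨h1, h2⟩
      exact ⟨fun y hy => by simp [not_lt.mpr (h1 y hy)], h2⟩

lemma invCount_append_perm (l₁ : List ℤ) {m₁ m₂ : List ℤ} (h : m₁.Perm m₂) :
    invCount (l₁ ++ m₁) + invCount m₂ = invCount (l₁ ++ m₂) + invCount m₁ := by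
  induction l₁ with
  | nil => simp [Nat.add_comm]
  | cons x l₁ ih =>
    simp only [List.cons_append, invCount_cons, List.countP_append]
    rw [h.countP_eq]
    omega

lemma invCount_swap (x y : ℤ) (l : List ℤ) :
    invCount (x :: y :: l) + (if y < x then 1 else 0)
      = invCount (y :: x :: l) + (if x < y then 1 else 0) := by
  simp only [invCount_cons, List.countP_cons]
  rcases lt_trichotomy x y with h | h | h <;>
    simp [h, not_lt.mpr h.le, lt_irrefl] <;> omega

lemma invCount_adjSwap_general (l₁ l₂ : List ℤ) (x y : ℤ) :
    invCount (l₁ ++ x :: y :: l₂) + (if y < x then 1 else 0)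
      = invCount (l₁ ++ y :: x :: l₂) + (if x < y then 1 else 0) := by
  have hp : (x :: y :: l₂).Perm (y :: x :: l₂) := List.Perm.swap _ _ _
  have h1 := invCount_append_perm l₁ hp
  have h2 := invCount_swap x y l₂
  omega

lemma adjSwap_le {l l' : List ℤ} (h : AdjSwap l l') :
    invCount l ≤ invCount l' + 1 := by
  obtain ⟨l₁, x, y, l₂, rfl, rfl⟩ := h
  have := invCount_adjSwap_general l₁ l₂ x y
  split_ifs at this <;> omega

lemma sortCost_lb {l : List ℤ} {n : ℕ} (h : n ∈ SortCost l) : invCount l ≤ n := by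
  obtain ⟨f, hf0, hstep, hsort⟩ := h
  have key : ∀ k ≤ n, invCount (f (n - k)) ≤ k := by
    intro k hk
    induction k with
    | zero => simp [(invCount_eq_zero_iff (f n)).mpr hsort]
    | succ k ih =>
      have h1 : n - (k+1) < n := by omega
      have h2 : (n - (k+1)) + 1 = n - k := by omega
      have := adjSwap_le (hstep _ h1)
      rw [h2] at this
      have := ih (by omega)
      omega
  have := key n (le_refl n)
  simpa [hf0] using this

lemma exists_adj_inversion {l : List ℤ} (h : invCount l ≠ 0) :
    ∃ l₁ x y l₂, l = l₁ ++ x :: y :: l₂ ∧ x < y := by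
  induction l with
  | nil => simp at h
  | cons a xs ih =>
    by_cases hxs : invCount xs = 0
    · have hsort := (invCount_eq_zero_iff xs).mp hxs
      have hc : xs.countP (fun y => decide (a < y)) ≠ 0 := by
        simp only [invCount_cons, hxs] at h; omega
      rw [Ne, List.countP_eq_zero] at hc
      push_neg at hc
      obtain ⟨y, hy, hay⟩ := hc
      cases xs with
      | nil => simp at hy
      | cons z zs =>
        refine ⟨[], a, z, zs, rfl, ?_⟩
        rcases List.mem_cons.mp hy with rfl | hy'
        · exact of_decide_eq_true hay
        · have : z ≥ y := (List.pairwise_cons.mp hsort).1 y hy'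
          exact lt_of_lt_of_le (of_decide_eq_true hay) this
    · obtain ⟨l₁, x, y, l₂, heq, hxy⟩ := ih hxs
      exact ⟨a :: l₁, x, y, l₂, by rw [heq]; rfl, hxy⟩

lemma invCount_mem_sortCost (l : List ℤ) : invCount l ∈ SortCost l := by
  generalize hn : invCount l = n
  induction n generalizing l with
  | zero =>
    exact ⟨fun _ => l, rfl, fun i hi => by omega, (invCount_eq_zero_iff l).mp hn⟩
  | succ n ih =>
    obtain ⟨l₁, x, y, l₂, rfl, hxy⟩ := exists_adj_inversion (l := l) (by omega)
    have hadj : AdjSwap (l₁ ++ x :: y :: l₂) (l₁ ++ y :: x :: l₂) :=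
      ⟨l₁, x, y, l₂, rfl, rfl⟩
    have hinv' : invCount (l₁ ++ y :: x :: l₂) = n := by
      have := invCount_adjSwap_general l₁ l₂ x y
      rw [hn] at this
      simp [hxy, not_lt.mpr hxy.le] at this
      omega
    obtain ⟨f, hf0, hstep, hsort⟩ := ih _ hinv'
    refine ⟨fun i => if i = 0 then l₁ ++ x :: y :: l₂ else f (i - 1), by simp, ?_, ?_⟩
    · intro i hi
      cases i with
      | zero => simpa [hf0] using hadj
      | succ j => simpa using hstep j (by omega)
    · simpa using hsort

lemma piMin_eq (l : List ℤ) : piMin l = invCount l :=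
  le_antisymm (Nat.sInf_le (invCount_mem_sortCost l))
    (le_csInf ⟨_, invCount_mem_sortCost l⟩ fun _ hb => sortCost_lb hb)

/-- sum over unordered pairs of the max. -/
def maxSum : List ℤ → ℤ
  | [] => 0
  | x :: xs => (xs.map (fun y => max x y)).sum + maxSum xs

@[simp] lemma maxSum_nil : maxSum [] = 0 := rfl
@[simp] lemma maxSum_cons (x : ℤ) (xs : List ℤ) :
    maxSum (x :: xs) = (xs.map (fun y => max x y)).sum + maxSum xs := rfl

lemma maxSum_perm : ∀ {l l' : List ℤ}, l.Perm l' → maxSum l = maxSum l' := by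
  intro l l' h
  induction h with
  | nil => rfl
  | cons x h ih => simp [ih, (h.map _).sum_eq]
  | swap x y l =>
    simp only [maxSum_cons, List.map_cons, List.sum_cons, max_comm x y]
    ring
  | trans h₁ h₂ ih₁ ih₂ => rw [ih₁, ih₂]

lemma sorted_weight_sum (l : List ℤ) (h : l.Pairwise (· ≥ ·)) :
    ∑ i ∈ Finset.range l.length, l.getD i 0 * ((l.length : ℤ) - 1 - i) = maxSum l := by
  induction l with
  | nil => simp
  | cons x xs ih =>
    rw [List.length_cons, Finset.sum_range_succ']
    simp only [List.getD_cons_succ, List.getD_cons_zero]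
    rw [List.pairwise_cons] at h
    have hmap : xs.map (fun y => max x y) = xs.map (fun _ => x) := by
      apply List.map_congr_left
      intro y hy
      exact max_eq_left (h.1 y hy)
    have hconst : (xs.map (fun _ => x)).sum = (xs.length : ℤ) * x := by
      induction xs with
      | nil => simp
      | cons z zs ihz => simp [ihz]; push_cast; ring
    rw [maxSum_cons, hmap, hconst, ← ih h.2]
    have hs : ∑ i ∈ Finset.range xs.length,
        xs.getD i 0 * (((xs.length + 1 : ℕ) : ℤ) - 1 - ((i + 1 : ℕ) : ℤ))
        = ∑ i ∈ Finset.range xs.length, xs.getD i 0 * ((xs.length : ℤ) - 1 - (i : ℤ)) := by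
      refine Finset.sum_congr rfl fun i _ => ?_
      push_cast
      ring
    rw [hs]
    push_cast
    ring

lemma invCount_append_singleton (l : List ℤ) (d : ℤ) :
    invCount (l ++ [d]) = invCount l + l.countP (fun y => decide (y < d)) := by
  induction l with
  | nil => simp
  | cons x xs ih =>
    simp only [List.cons_append, invCount_cons, List.countP_append, List.countP_cons,
      ih, List.countP_nil]
    omega

lemma maxSum_append_singleton (l : List ℤ) (d : ℤ) :
    maxSum (l ++ [d]) = maxSum l + (l.map (fun y => max y d)).sum := by
  induction l with
  | nil => simp
  | cons x xs ih =>
    simp only [List.cons_append, maxSum_cons, List.map_append, List.map_cons,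
      List.map_nil, List.sum_append, List.sum_cons, List.sum_nil, ih]
    rw [max_comm x d]
    ring

lemma sum_map_add_indicator (f g : ℤ → ℤ) (p : ℤ → Bool) (l : List ℤ)
    (h : ∀ y ∈ l, f y = g y + (if p y then 1 else 0)) :
    (l.map f).sum = (l.map g).sum + l.countP p := by
  induction l with
  | nil => simp
  | cons x xs ih =>
    simp only [List.map_cons, List.sum_cons, List.countP_cons,
      ih (fun y hy => h y (List.mem_cons_of_mem x hy)), h x List.mem_cons_self]
    split_ifs <;> push_cast <;> ring

lemma countP_lt_add_countP_ge (l : List ℤ) (d : ℤ) :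
    l.countP (fun y => decide (y < d)) + l.countP (fun y => decide (d - 1 < y)) = l.length := by
  induction l with
  | nil => simp
  | cons x xs ih =>
    simp only [List.countP_cons, List.length_cons]
    have : (decide (x < d) = true ∧ ¬ decide (d - 1 < x) = true) ∨
        (¬ decide (x < d) = true ∧ decide (d - 1 < x) = true) := by
      by_cases h : x < d <;> simp [h] <;> omega
    rcases this with ⟨h1, h2⟩ | ⟨h1, h2⟩
    · rw [if_pos h1, if_neg h2]; omega
    · rw [if_neg h1, if_pos h2]; omega

lemma invCount_map_add_one (l : List ℤ) :
    invCount (l.map (fun y => y + 1)) = invCount l := by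
  induction l with
  | nil => simp
  | cons x xs ih =>
    simp only [List.map_cons, invCount_cons, ih, List.countP_map]
    congr 1
    apply List.countP_congr
    intro y _
    simp only [Function.comp_apply]
    constructor <;> intro h <;> simp_all <;> omega

lemma maxSum_map_add_one (l : List ℤ) :
    2 * maxSum (l.map (fun y => y + 1)) = 2 * maxSum l + l.length * ((l.length : ℤ) - 1) := by
  induction l with
  | nil => simp
  | cons x xs ih =>
    simp only [List.map_cons, maxSum_cons, List.map_map, List.length_cons]
    have hmap : (xs.map (fun y => max (x + 1) (y + 1))).sum
        = (xs.map (fun y => max x y)).sum + xs.length := by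
      have : ∀ y ∈ xs, max (x + 1) (y + 1) = max x y + (if (true : Bool) then 1 else 0) := by
        intro y _
        simp [max_add_add_right]
      simpa using sum_map_add_indicator _ _ _ xs this
    have hcomp : ((fun y => max (x+1) y) ∘ (fun y => y + 1)) = (fun y => max (x+1) (y+1)) := rfl
    rw [hcomp]
    rw [mul_add, hmap]
    push_cast
    nlinarith [ih]

end ClassAux

lemma insertIdx_length_append (l₁ l₂ : List ℤ) (d : ℤ) :
    (l₁ ++ l₂).insertIdx l₁.length d = l₁ ++ d :: l₂ := by
  induction l₁ with
  | nil => rfl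
  | cons x xs ih => simp [List.insertIdx_succ_cons, ih]

lemma insertIdx_length_append' (l₁ l₂ : List ℤ) (x d : ℤ) :
    (l₁ ++ x :: l₂).insertIdx (l₁.length + 1) d = l₁ ++ x :: d :: l₂ := by
  have h := insertIdx_length_append (l₁ ++ [x]) l₂ d
  simpa using h

lemma map_range_split (f : ℕ → ℤ) {M n : ℕ} (h : n < M) :
    (List.range M).map f
      = (List.range n).map f ++ f n
          :: (List.range (M - n - 1)).map (fun m => f (n + 1 + m)) := by
  obtain ⟨k, rfl⟩ : ∃ k, M = n + 1 + k := ⟨M - n - 1, by omega⟩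
  have hk : n + 1 + k - n - 1 = k := by omega
  rw [hk, List.range_add, List.range_succ]
  simp [Function.comp]

lemma insert_at_lower (g : ℕ → ℤ) (d : ℤ) {M n : ℕ} (hn : n < M) :
    ((List.range M).map g).insertIdx n d
      = (List.range n).map g ++ d :: g n
          :: (List.range (M - n - 1)).map (fun m => g (n + 1 + m)) := by
  rw [map_range_split g hn]
  have h := insertIdx_length_append ((List.range n).map g)
    (g n :: (List.range (M - n - 1)).map (fun m => g (n + 1 + m))) d
  rwa [List.length_map, List.length_range] at h

lemma insert_at_higher (g : ℕ → ℤ) (d : ℤ) {M n : ℕ} (hn : n < M) :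
    ((List.range M).map g).insertIdx (n + 1) d
      = (List.range n).map g ++ g n :: d
          :: (List.range (M - n - 1)).map (fun m => g (n + 1 + m)) := by
  rw [map_range_split g hn]
  have h := insertIdx_length_append' ((List.range n).map g)
    ((List.range (M - n - 1)).map (fun m => g (n + 1 + m))) (g n) d
  rwa [List.length_map, List.length_range] at h

lemma tuple_length {M : ℕ} (s : St M) : (tuple s).length = M + 1 := by
  rw [tuple, List.length_insertIdx]
  · have := s.ht2
    simp
    omega

lemma Kc_eq {M : ℕ} (s : St M) :
    Kc s = -(invCount (tuple s) : ℤ) + (M : ℤ) * s.T + 2 * maxSum (tuple s) := by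
  have hlen : (tuple s).length = M + 1 := tuple_length s
  have hperm : (sortedTuple (tuple s)).Perm (tuple s) := List.perm_insertionSort _ _
  have hsort : (sortedTuple (tuple s)).Pairwise (· ≥ ·) := List.pairwise_insertionSort _ _
  have hlen' : (sortedTuple (tuple s)).length = M + 1 := by rw [hperm.length_eq, hlen]
  have hws := sorted_weight_sum _ hsort
  rw [hlen'] at hws
  have hsum : ∑ i ∈ Finset.range (M + 1),
      (sortedTuple (tuple s)).getD i 0 * ((M : ℤ) - i) = maxSum (tuple s) := by
    rw [← maxSum_perm hperm, ← hws]
    refine Finset.sum_congr rfl fun i _ => ?_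
    push_cast
    ring
  rw [Kc, piMin_eq, hsum]

end BDM

open BDM in
/-- For every feasible transition `s → s'` between BDM states
`s, s' ∈ S` with action `α`, the class changes by `+1` for `α = I`, by `−1`
for `α = N_<`, and is unchanged for `α ∈ {D, N_=, d_−, b_+}`. -/
theorem bdm_class_change_of_step (M q : ℕ) (hM : 1 ≤ M) (hq : 2 ≤ q)
    (s s' : St M) (hs : inS s) (hs' : inS s') (α : Act) (h : Step s α s') :
    Kc s' = Kc s + (match α with
      | Act.I => 1
      | Act.Nl => -1
      | _ => 0) := by
  cases α with
  | D =>
    show Kc s' = Kc s + 0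
    obtain ⟨htM, hlt, ht', hT', hd', hb'⟩ := h
    have ht1 := s.ht1
    have hn : s.t - 1 < M := by omega
    have hnt : s.t - 1 + 1 = s.t := by omega
    have h1 : tuple s = (List.range (s.t - 1)).map (fun m => s.b (m + 1)) ++
        s.d :: s.b s.t :: (List.range (M - (s.t - 1) - 1)).map (fun m => s.b (s.t + m + 1)) := by
      rw [tuple, insert_at_lower _ _ hn]
      simp only [hnt]
    have hPupd : (List.range (s.t - 1)).map (fun m => Function.update s.b s.t s.d (m + 1))
        = (List.range (s.t - 1)).map (fun m => s.b (m + 1)) := by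
      apply List.map_congr_left
      intro m hm
      rw [List.mem_range] at hm
      exact Function.update_of_ne (by omega) _ _
    have hQupd : (List.range (M - (s.t - 1) - 1)).map
          (fun m => Function.update s.b s.t s.d (s.t + m + 1))
        = (List.range (M - (s.t - 1) - 1)).map (fun m => s.b (s.t + m + 1)) := by
      apply List.map_congr_left
      intro m hm
      exact Function.update_of_ne (by omega) _ _
    have h2 : tuple s' = (List.range (s.t - 1)).map (fun m => s.b (m + 1)) ++
        s.d :: s.b s.t :: (List.range (M - (s.t - 1) - 1)).map (fun m => s.b (s.t + m + 1)) := by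
      rw [tuple, hb', hd', show s'.t - 1 = (s.t - 1) + 1 from by omega,
        insert_at_higher _ _ hn]
      rw [hnt, hPupd, hQupd, Function.update_self]
    rw [Kc_eq, Kc_eq, h1, h2, hT']
    ring
  | I =>
    show Kc s' = Kc s + 1
    obtain ⟨htM, hlt, ht', hT', hd', hb'⟩ := h
    have ht1 := s.ht1
    have hn : s.t - 1 < M := by omega
    have hnt : s.t - 1 + 1 = s.t := by omega
    set P := (List.range (s.t - 1)).map (fun m => s.b (m + 1)) with hP
    set Q := (List.range (M - (s.t - 1) - 1)).map (fun m => s.b (s.t + m + 1)) with hQ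
    have h1 : tuple s = P ++ s.d :: s.b s.t :: Q := by
      rw [tuple, insert_at_lower _ _ hn]
      simp only [hnt, hP, hQ]
    have h2 : tuple s' = P ++ s.b s.t :: s.d :: Q := by
      rw [tuple, hb', hd', show s'.t - 1 = (s.t - 1) + 1 from by omega,
        insert_at_higher _ _ hn]
      simp only [hnt, hP, hQ]
    have hinv : invCount (P ++ s.d :: s.b s.t :: Q)
        = invCount (P ++ s.b s.t :: s.d :: Q) + 1 := by
      have := invCount_adjSwap_general P Q s.d (s.b s.t)
      simp only [if_pos hlt, if_neg (not_lt.mpr hlt.le)] at this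
      omega
    have hmax : maxSum (P ++ s.d :: s.b s.t :: Q) = maxSum (P ++ s.b s.t :: s.d :: Q) :=
      maxSum_perm ((List.Perm.swap _ _ _).append_left P)
    rw [Kc_eq, Kc_eq, h1, h2, hT', hinv, hmax]
    push_cast
    ring
  | Ne =>
    show Kc s' = Kc s + 0
    obtain ⟨htM, heq, ht', hT', hd', hb'⟩ := h
    have ht1 := s.ht1
    have hn : s.t - 1 < M := by omega
    have hnt : s.t - 1 + 1 = s.t := by omega
    have h1 : tuple s = (List.range (s.t - 1)).map (fun m => s.b (m + 1)) ++
        s.d :: s.d :: (List.range (M - (s.t - 1) - 1)).map (fun m => s.b (s.t + m + 1)) := by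
      rw [tuple, insert_at_lower _ _ hn]
      simp only [hnt, heq]
    have h2 : tuple s' = (List.range (s.t - 1)).map (fun m => s.b (m + 1)) ++
        s.d :: s.d :: (List.range (M - (s.t - 1) - 1)).map (fun m => s.b (s.t + m + 1)) := by
      rw [tuple, hb', hd', show s'.t - 1 = (s.t - 1) + 1 from by omega,
        insert_at_higher _ _ hn]
      simp only [hnt, heq]
    rw [Kc_eq, Kc_eq, h1, h2, hT']
    ring
  | Nl =>
    show Kc s' = Kc s + (-1)
    obtain ⟨htM, hlt, ht', hT', hd', hb'⟩ := h
    have ht1 := s.ht1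
    have hn : s.t - 1 < M := by omega
    have hnt : s.t - 1 + 1 = s.t := by omega
    set P := (List.range (s.t - 1)).map (fun m => s.b (m + 1)) with hP
    set Q := (List.range (M - (s.t - 1) - 1)).map (fun m => s.b (s.t + m + 1)) with hQ
    have h1 : tuple s = P ++ s.d :: s.b s.t :: Q := by
      rw [tuple, insert_at_lower _ _ hn]
      simp only [hnt, hP, hQ]
    have h2 : tuple s' = P ++ s.b s.t :: s.d :: Q := by
      rw [tuple, hb', hd', show s'.t - 1 = (s.t - 1) + 1 from by omega,
        insert_at_higher _ _ hn]
      simp only [hnt, hP, hQ]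
    have hinv : invCount (P ++ s.b s.t :: s.d :: Q)
        = invCount (P ++ s.d :: s.b s.t :: Q) + 1 := by
      have := invCount_adjSwap_general P Q s.d (s.b s.t)
      simp only [if_pos hlt, if_neg (not_lt.mpr hlt.le)] at this
      omega
    have hmax : maxSum (P ++ s.d :: s.b s.t :: Q) = maxSum (P ++ s.b s.t :: s.d :: Q) :=
      maxSum_perm ((List.Perm.swap _ _ _).append_left P)
    rw [Kc_eq, Kc_eq, h1, h2, hT', hinv, hmax]
    push_cast
    ring
  | dm =>
    show Kc s' = Kc s + 0
    obtain ⟨htM, hTlt, ht', hT', hd', hb'⟩ := h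
    set B := (List.range M).map (fun m => s.b (m + 1)) with hB
    have hlB : B.length = M := by simp [hB]
    have h1 : tuple s = B ++ [s.d] := by
      rw [tuple, htM, show M + 1 - 1 = M from rfl, ← hB]
      have hx : List.insertIdx B M s.d = List.insertIdx B B.length s.d := by rw [hlB]
      rw [hx, List.insertIdx_length_self]
    have h2 : tuple s' = (s.d - 1) :: B := by
      rw [tuple, hb', hd', ht', ← hB]
      rfl
    have hc := countP_lt_add_countP_ge B s.d
    rw [hlB] at hc
    have hi1 : invCount (tuple s)
        = invCount B + B.countP (fun y => decide (y < s.d)) := by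
      rw [h1, invCount_append_singleton]
    have hi2 : invCount (tuple s')
        = B.countP (fun y => decide (s.d - 1 < y)) + invCount B := by
      rw [h2, invCount_cons]
    have hm1 : maxSum (tuple s) = maxSum B + (B.map (fun y => max y s.d)).sum := by
      rw [h1, maxSum_append_singleton]
    have hm2 : maxSum (tuple s')
        = (B.map (fun y => max (s.d - 1) y)).sum + maxSum B := by
      rw [h2, maxSum_cons]
    have hsum : (B.map (fun y => max y s.d)).sum
        = (B.map (fun y => max (s.d - 1) y)).sum
            + B.countP (fun y => decide (y < s.d)) := by
      apply sum_map_add_indicator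
      intro y _
      by_cases hyd : y < s.d
      · rw [max_eq_right hyd.le, max_eq_left (by omega : y ≤ s.d - 1)]
        simp [hyd]
      · rw [max_eq_left (not_lt.mp hyd), max_eq_right (by omega : s.d - 1 ≤ y)]
        simp [hyd]
    have hc' : (B.countP (fun y => decide (y < s.d)) : ℤ)
        + (B.countP (fun y => decide (s.d - 1 < y)) : ℤ) = (M : ℤ) := by
      exact_mod_cast congrArg (Nat.cast (R := ℤ)) hc
    rw [Kc_eq, Kc_eq, hi1, hi2, hm1, hm2, hsum, hT']
    push_cast
    push_cast at hc'
    linarith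
  | bp =>
    show Kc s' = Kc s + 0
    obtain ⟨htM, hTM, ht', hT', hd', hb'⟩ := h
    set B := (List.range M).map (fun m => s.b (m + 1)) with hB
    have hlB : B.length = M := by simp [hB]
    have h1 : tuple s = B ++ [s.d] := by
      rw [tuple, htM, show M + 1 - 1 = M from rfl, ← hB]
      have hx : List.insertIdx B M s.d = List.insertIdx B B.length s.d := by rw [hlB]
      rw [hx, List.insertIdx_length_self]
    have hmapB : (List.range M).map (fun m => s'.b (m + 1)) = B.map (fun y => y + 1) := by
      rw [hb', hB, List.map_map]
      apply List.map_congr_left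
      intro m hm
      rw [List.mem_range] at hm
      simp only [Function.comp_apply]
      rw [if_pos ⟨by omega, by omega⟩]
    have h2 : tuple s' = s.d :: B.map (fun y => y + 1) := by
      rw [tuple, hd', ht', hmapB]
      rfl
    have hc := countP_lt_add_countP_ge B s.d
    rw [hlB] at hc
    have hi1 : invCount (tuple s)
        = invCount B + B.countP (fun y => decide (y < s.d)) := by
      rw [h1, invCount_append_singleton]
    have hi2 : invCount (tuple s')
        = B.countP (fun y => decide (s.d - 1 < y)) + invCount B := by
      rw [h2, invCount_cons, List.countP_map, invCount_map_add_one]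
      congr 1
      apply List.countP_congr
      intro y _
      simp only [Function.comp_apply, decide_eq_true_eq]
      omega
    have hm1 : maxSum (tuple s) = maxSum B + (B.map (fun y => max y s.d)).sum := by
      rw [h1, maxSum_append_singleton]
    have hm2 : maxSum (tuple s')
        = (B.map (fun y => max s.d (y + 1))).sum + maxSum (B.map (fun y => y + 1)) := by
      rw [h2, maxSum_cons, List.map_map]
      rfl
    have hsum : (B.map (fun y => max s.d (y + 1))).sum
        = (B.map (fun y => max y s.d)).sum
            + B.countP (fun y => decide (s.d - 1 < y)) := by
      apply sum_map_add_indicator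
      intro y _
      by_cases hyd : s.d - 1 < y
      · rw [max_eq_right (by omega : s.d ≤ y + 1), max_eq_left (by omega : s.d ≤ y)]
        simp [hyd]
      · rw [max_eq_left (by omega : y + 1 ≤ s.d), max_eq_right (by omega : y ≤ s.d)]
        simp [hyd]
    have hms := maxSum_map_add_one B
    rw [hlB] at hms
    have hc' : (B.countP (fun y => decide (y < s.d)) : ℤ)
        + (B.countP (fun y => decide (s.d - 1 < y)) : ℤ) = (M : ℤ) := by
      exact_mod_cast congrArg (Nat.cast (R := ℤ)) hc
    rw [Kc_eq, Kc_eq, hi1, hi2, hm1, hm2, hsum, hT', hTM]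
    push_cast
    push_cast at hc' hms
    linarith
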